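/- Let Ω ⊆ ℝⁿ be open, let B ⋐ Ω be a ball and let u ∈ BV^𝔸_loc(Ω). Then there exists a linear map a : ℝⁿ → V such that 𝔸a = (𝔸u)_B, i.e. the constant W-valued function Σ_{α=1}^n 𝔸_α(a e_α) equals the mean value (𝔸u)_B; in particular, (𝔸u)_B belongs to the effective range ℛ(𝔸) = span{ξ ⊗_𝔸 v : ξ ∈ ℝⁿ, v ∈ V}. -/

import Mathlib

open MeasureTheory Filter Metric Set
open scoped Topology ENNReal NNReal

noncomputable section

/-- `n`-dimensional Euclidean space. -/
abbrev Euc (n : ℕ) := EuclideanSpace ℝ (Fin n)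

section Defs

variable {n : ℕ} {V W : Type*}
  [NormedAddCommGroup V] [InnerProductSpace ℝ V] [FiniteDimensional ℝ V]
  [NormedAddCommGroup W] [InnerProductSpace ℝ W] [FiniteDimensional ℝ W]

/-- `ξ ⊗_𝔸 v = ∑ α, ξ α • 𝔸 α v`. -/
def otimesA (A : Fin n → V →L[ℝ] W) (ξ : Euc n) (v : V) : W := ∑ α, ξ α • A α v

/-- Pointwise action `𝔸 u (x) = ∑ α, 𝔸 α (∂_α u x)` of the operator `𝔸` on a map `u`. -/
def pwA (A : Fin n → V →L[ℝ] W) (u : Euc n → V) (x : Euc n) : W :=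
  ∑ α, A α (fderiv ℝ u x (EuclideanSpace.single α 1))

/-- Smooth compactly supported scalar test functions on `U`. -/
def IsTest (U : Set (Euc n)) (φ : Euc n → ℝ) : Prop :=
  ContDiff ℝ (⊤ : ℕ∞) φ ∧ HasCompactSupport φ ∧ tsupport φ ⊆ U

/-- Smooth compactly supported `V`-valued test maps on `U`. -/
def IsTestV (U : Set (Euc n)) (ζ : Euc n → V) : Prop :=
  ContDiff ℝ (⊤ : ℕ∞) ζ ∧ HasCompactSupport ζ ∧ tsupport ζ ⊆ U

/-- `𝔸` is ℂ-elliptic: the complexified symbol map `𝔸[ξ]` is injective for every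
`ξ ∈ ℂⁿ \ {0}`.  A vector of the complexification of `V` is encoded as a pair
`(v₁, v₂) = v₁ + i v₂`, and the two displayed equations are the real and imaginary
parts of `𝔸[ξ](v₁ + i v₂) = 0`. -/
def CElliptic (A : Fin n → V →L[ℝ] W) : Prop :=
  ∀ ξ : Fin n → ℂ, ξ ≠ 0 → ∀ v₁ v₂ : V,
    (∑ α, ((ξ α).re • A α v₁ - (ξ α).im • A α v₂)) = 0 →
    (∑ α, ((ξ α).re • A α v₂ + (ξ α).im • A α v₁)) = 0 →
    v₁ = 0 ∧ v₂ = 0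

/-- `(μ, σ)` is the total-variation/polar representation of the distributional
`𝔸`-gradient of `u` on `U`, i.e. `u ∈ BV^𝔸_loc(U)` with `𝔸 u = σ ⬝ μ` and `|𝔸 u| = μ`. -/
structure HasAGradLoc (A : Fin n → V →L[ℝ] W) (U : Set (Euc n))
    (u : Euc n → V) (μ : Measure (Euc n)) (σ : Euc n → W) : Prop where
  locint : ∀ K : Set (Euc n), K ⊆ U → IsCompact K → IntegrableOn u K volume
  suppU : μ Uᶜ = 0
  locfin : ∀ K : Set (Euc n), K ⊆ U → IsCompact K → μ K < ⊤
  polar : ∀ᵐ x ∂μ, ‖σ x‖ = 1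
  ibp : ∀ φ : Euc n → ℝ, IsTest U φ →
    ∫ x, φ x • σ x ∂μ =
      - ∫ x, ∑ α, fderiv ℝ φ x (EuclideanSpace.single α 1) • A α (u x)

/-- `u ∈ BV^𝔸(U)` with `𝔸 u = σ ⬝ μ`, `|𝔸 u| = μ`. -/
structure HasAGrad (A : Fin n → V →L[ℝ] W) (U : Set (Euc n))
    (u : Euc n → V) (μ : Measure (Euc n)) (σ : Euc n → W)
    extends HasAGradLoc A U u μ σ : Prop where
  int : IntegrableOn u U volume
  fin : μ Set.univ < ⊤

/-- The mean value `(𝔸 u)_B = 𝔸u(B)/ℒⁿ(B)` of the `𝔸`-gradient represented by `(μ, σ)`. -/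
def meanA (μ : Measure (Euc n)) (σ : Euc n → W) (B : Set (Euc n)) : W :=
  (volume B).toReal⁻¹ • ∫ x in B, σ x ∂μ

/-- The reference integrand `V₁(t) = √(1+t²) - 1`. -/
def V1 (t : ℝ) : ℝ := Real.sqrt (1 + t ^ 2) - 1

/-- `V₁` of the norm of a vector. -/
def V1v {Z : Type*} [NormedAddCommGroup Z] (z : Z) : ℝ := V1 ‖z‖

/-- The (strong) recession function `f^∞(w) = limsup_{t → ∞} f(t w)/t`. -/
def recession (f : W → ℝ) (w : W) : ℝ := limsup (fun t : ℝ => f (t • w) / t) atTop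

/-- The measure-extended integral `∫_ω f(𝔸u - w₀ ℒⁿ)` of the `𝔸`-gradient represented by
`(μ, σ)`, shifted by `w₀ ∈ W`:
`∫_ω f(d𝔸ᵃu/dℒⁿ - w₀) dx + ∫_ω f^∞(d𝔸ˢu/d|𝔸ˢu|) d|𝔸ˢu|`. -/
def extInt (f : W → ℝ) (ω : Set (Euc n)) (μ : Measure (Euc n)) (σ : Euc n → W)
    (w₀ : W) : ℝ :=
  (∫ x in ω, f ((μ.rnDeriv volume x).toReal • σ x - w₀)) +
    ∫ x in ω, recession f (σ x) ∂(μ.singularPart volume)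

/-- (H1), growth part: `f` is of linear growth with constant `L`. -/
def LinearGrowth (f : W → ℝ) (L : ℝ) : Prop := 0 < L ∧ ∀ z, |f z| ≤ L * (1 + ‖z‖)

/-- (H1), regularity part: `f ∈ C^{2,1}_loc(W)`. -/
def C21loc (f : W → ℝ) : Prop :=
  ContDiff ℝ 2 f ∧
    ∀ K : Set W, IsCompact K → ∃ C : ℝ≥0, LipschitzOnWith C (iteratedFDeriv ℝ 2 f) K

/-- `𝔸`-quasi-convexity of an integrand `F`. -/
def AQuasiconvex (A : Fin n → V →L[ℝ] W) (F : W → ℝ) : Prop :=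
  ∀ w : W, ∀ ζ : Euc n → V, IsTestV (ball (0 : Euc n) 1) ζ →
    F w ≤ ⨍ x in ball (0 : Euc n) 1, F (w + pwA A ζ x) ∂volume

/-- (H2): `f` is strongly `V₁`-`𝔸`-quasi-convex with constant `ν > 0`. -/
def StronglyQC (A : Fin n → V →L[ℝ] W) (f : W → ℝ) (ν : ℝ) : Prop :=
  0 < ν ∧ AQuasiconvex A (fun w => f w - ν * V1 ‖w‖)

/-- The `(n-1)`-dimensional Hausdorff (surface) measure on `ℝⁿ`. -/
def surf (n : ℕ) : Measure (Euc n) := μH[(n : ℝ) - 1]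

/-- Gagliardo seminorm (to the `p`-th power) on an `(n-1)`-dimensional surface `S`. -/
def gagS (p θ : ℝ) (S : Set (Euc n)) (w : Euc n → V) : ℝ≥0∞ :=
  ∫⁻ x in S, ∫⁻ y in S,
    ENNReal.ofReal (‖w x - w y‖ ^ p / ‖x - y‖ ^ ((n : ℝ) - 1 + θ * p)) ∂(surf n) ∂(surf n)

/-- Gagliardo seminorm (to the `p`-th power) on a subset of `ℝⁿ`. -/
def gagB (p θ : ℝ) (s : Set (Euc n)) (w : Euc n → V) : ℝ≥0∞ :=
  ∫⁻ x in s, ∫⁻ y in s,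
    ENNReal.ofReal (‖w x - w y‖ ^ p / ‖x - y‖ ^ ((n : ℝ) + θ * p)) ∂volume ∂volume

/-- `b ∈ 𝒩(𝔸)`: `b` is locally integrable and `𝔸 b = 0` in the sense of distributions. -/
def InNullSpace (A : Fin n → V →L[ℝ] W) (b : Euc n → V) : Prop :=
  (∀ K : Set (Euc n), IsCompact K → IntegrableOn b K volume) ∧
    ∀ φ : Euc n → ℝ, IsTest Set.univ φ →
      ∫ x, ∑ α, fderiv ℝ φ x (EuclideanSpace.single α 1) • A α (b x) = 0

/-- `Au` is the weak (function-valued) `𝔸`-gradient of `u` on `U`. -/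
def WeakAGradOn (A : Fin n → V →L[ℝ] W) (U : Set (Euc n)) (u : Euc n → V)
    (Au : Euc n → W) : Prop :=
  (∀ K : Set (Euc n), K ⊆ U → IsCompact K →
      IntegrableOn u K volume ∧ IntegrableOn Au K volume) ∧
    ∀ φ : Euc n → ℝ, IsTest U φ →
      ∫ x, φ x • Au x =
        - ∫ x, ∑ α, fderiv ℝ φ x (EuclideanSpace.single α 1) • A α (u x)

/-- `Du` is the weak (full) gradient of `u` on `U`. -/
def WeakGradOn (U : Set (Euc n)) (u : Euc n → V) (Du : Euc n → (Euc n →L[ℝ] V)) : Prop :=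
  (∀ K : Set (Euc n), K ⊆ U → IsCompact K →
      IntegrableOn u K volume ∧ IntegrableOn Du K volume) ∧
    ∀ φ : Euc n → ℝ, IsTest U φ → ∀ α : Fin n,
      ∫ x, φ x • Du x (EuclideanSpace.single α 1) =
        - ∫ x, fderiv ℝ φ x (EuclideanSpace.single α 1) • u x

/-- `𝔸 u` computed from a weak gradient `Du`. -/
def pwAD (A : Fin n → V →L[ℝ] W) (Du : Euc n → (Euc n →L[ℝ] V)) (x : Euc n) : W :=
  ∑ α, A α (Du x (EuclideanSpace.single α 1))

/-- Open bounded Lipschitz domain: near every boundary point the domain is, in suitable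
orthonormal coordinates, the epigraph of a Lipschitz function. -/
def IsLipschitzDomain (D : Set (Euc n)) : Prop :=
  IsOpen D ∧ Bornology.IsBounded D ∧ D.Nonempty ∧
    ∀ x ∈ frontier D, ∃ (K : ℝ≥0) (φ : EuclideanSpace ℝ (Fin (n - 1)) → ℝ)
      (e : Euc n ≃ₗᵢ[ℝ] WithLp 2 (EuclideanSpace ℝ (Fin (n - 1)) × ℝ)) (r : ℝ),
      0 < r ∧ LipschitzWith K φ ∧
        ball x r ∩ D =
          {y ∈ ball x r |
            φ ((WithLp.equiv 2 (EuclideanSpace ℝ (Fin (n - 1)) × ℝ)) (e (y - x))).1 <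
              ((WithLp.equiv 2 (EuclideanSpace ℝ (Fin (n - 1)) × ℝ)) (e (y - x))).2}

/-- `T` is the (interior) trace of `u` on `∂D`. -/
def IsInnerTraceOn (D : Set (Euc n)) (u T : Euc n → V) : Prop :=
  ∀ᵐ x ∂((surf n).restrict (frontier D)),
    Tendsto (fun ρ => ⨍ y in ball x ρ ∩ D, ‖u y - T x‖ ∂volume) (𝓝[>] (0 : ℝ)) (𝓝 0)

/-- `ν` is the measure-theoretic outer unit normal of `D` at `x`. -/
def IsOuterNormalAt (D : Set (Euc n)) (x ν : Euc n) : Prop :=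
  ‖ν‖ = 1 ∧
    Tendsto (fun ρ =>
        volume {y ∈ ball x ρ ∩ D | 0 < (inner ℝ (y - x) ν : ℝ)} / volume (ball x ρ))
      (𝓝[>] (0 : ℝ)) (𝓝 0) ∧
    Tendsto (fun ρ =>
        volume {y ∈ ball x ρ \ D | (inner ℝ (y - x) ν : ℝ) < 0} / volume (ball x ρ))
      (𝓝[>] (0 : ℝ)) (𝓝 0)

/-- An a.e. outer unit normal field on `∂D`. -/
def IsNormalField (D : Set (Euc n)) (νf : Euc n → Euc n) : Prop :=
  ∀ᵐ x ∂((surf n).restrict (frontier D)), IsOuterNormalAt D x (νf x)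

/-- The boundary penalty term `∫_{∂D} f^∞(ν_{∂D} ⊗_𝔸 T) dH^{n-1}` (with `T` the trace of
`v - g` on `∂D`). -/
def penalty (f : W → ℝ) (A : Fin n → V →L[ℝ] W) (D : Set (Euc n))
    (νf : Euc n → Euc n) (T : Euc n → V) : ℝ :=
  ∫ x in frontier D, recession f (otimesA A (νf x) (T x)) ∂(surf n)

/-- The relaxed functional `F̄_g[v; D]`, where `(μ, σ)` represents `𝔸 v` on `D` and `T` is
the trace of `v - g` on `∂D`. -/
def relaxedF (f : W → ℝ) (A : Fin n → V →L[ℝ] W) (D : Set (Euc n))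
    (μ : Measure (Euc n)) (σ : Euc n → W) (νf : Euc n → Euc n) (T : Euc n → V) : ℝ :=
  extInt f D μ σ 0 + penalty f A D νf T

/-- `u ∈ BV^𝔸_loc(Ω)`, with `𝔸 u` represented by `(μ, σ)`, is a local generalised minimiser
of the functional associated to `f`:  `F̄_u[u; D] ≤ F̄_u[ζ; D]` for every open bounded
Lipschitz domain `D ⋐ Ω` and every `ζ ∈ BV^𝔸(D)`.  (Note `Tr_D(u - u) = 0` and
`Tr_D(ζ - u) = Tr_D ζ - Tr_D u`.) -/
def IsLocGenMin (f : W → ℝ) (A : Fin n → V →L[ℝ] W) (Ω : Set (Euc n))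
    (u : Euc n → V) (μ : Measure (Euc n)) (σ : Euc n → W) : Prop :=
  HasAGradLoc A Ω u μ σ ∧
    ∀ D : Set (Euc n), IsLipschitzDomain D → closure D ⊆ Ω →
      ∀ (ζ : Euc n → V) (μζ : Measure (Euc n)) (σζ : Euc n → W), HasAGrad A D ζ μζ σζ →
        ∀ Tu Tζ : Euc n → V, IsInnerTraceOn D u Tu → IsInnerTraceOn D ζ Tζ →
          ∀ νf : Euc n → Euc n, IsNormalField D νf →
            relaxedF f A D (μ.restrict D) σ νf (fun _ => (0 : V)) ≤
              relaxedF f A D μζ σζ νf (fun x => Tζ x - Tu x)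

/-- `u` coincides a.e. on `s` with a map of class `C^{1,a}(s)`. -/
def C1HolderOn (u : Euc n → V) (s : Set (Euc n)) (a : ℝ) : Prop :=
  ∃ v : Euc n → V, (∀ᵐ x ∂(volume.restrict s), u x = v x) ∧ ContDiffOn ℝ 1 v s ∧
    ∃ C : ℝ, ∀ x ∈ s, ∀ y ∈ s,
      ‖fderivWithin ℝ v s x - fderivWithin ℝ v s y‖ ≤ C * ‖x - y‖ ^ a

/-- The normalised excess `Excess*(u; x, r)` of the `𝔸`-gradient represented by `(μ, σ)`. -/
def excessStar (μ : Measure (Euc n)) (σ : Euc n → W) (x : Euc n) (r : ℝ) : ℝ :=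
  extInt V1v (ball x r) μ σ (meanA μ σ (ball x r)) / (volume (ball x r)).toReal

/-- The singular set `Σ_u` of a `BV^𝔸_loc`-map whose `𝔸`-gradient is represented
by `(μ, σ)`. -/
def singularSet (μ : Measure (Euc n)) (σ : Euc n → W) (Ω : Set (Euc n)) : Set (Euc n) :=
  {x ∈ Ω | limsup (fun r : ℝ => ENNReal.ofReal ‖meanA μ σ (ball x r)‖) (𝓝[>] (0 : ℝ)) = ⊤} ∪
    {x ∈ Ω | 0 < liminf (fun r : ℝ => ENNReal.ofReal (excessStar μ σ x r)) (𝓝[>] (0 : ℝ))}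

end Defs

/-!
The idea: testing the `𝔸`-gradient against a scalar test function `φ` gives
`∫ φ σ dμ = -∫ ∑_α ∂_α φ 𝔸_α u`, whose integrand takes values in the span of the ranges of the
`𝔸_α`.  Letting `φ` run through bump functions increasing to the indicator of the ball, dominated
convergence and closedness of this finite-dimensional span put `𝔸u(B)` in it.  Every vector of
that span is `𝔸a` for a linear map `a`, and every `𝔸a` lies in `ℛ(𝔸)`.
-/

theorem Submodule.integral_mem {X E : Type*} [MeasurableSpace X] {μ : Measure X}
    [NormedAddCommGroup E] [NormedSpace ℝ E] [CompleteSpace E]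
    (S : Submodule ℝ E) [IsClosed (S : Set E)] {f : X → E} (hf : ∀ x, f x ∈ S) :
    ∫ x, f x ∂μ ∈ S := by
  by_cases hfi : Integrable f μ
  · rw [← Submodule.Quotient.mk_eq_zero, ← Submodule.mkQ_apply, ← Submodule.coe_mkQL,
      ← ContinuousLinearMap.integral_comp_comm _ hfi]
    simp [(Submodule.Quotient.mk_eq_zero S).2 (hf _)]
  · rw [integral_undef hfi]
    exact S.zero_mem

theorem tendsto_integral_smul_of_tendsto_indicator {X F : Type*} [MeasurableSpace X]
    {μ : Measure X} [NormedAddCommGroup F] [NormedSpace ℝ F]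
    {s : Set X} (hs : MeasurableSet s) {f : X → F} (hf : IntegrableOn f s μ)
    {g : ℕ → X → ℝ} (hg_meas : ∀ k, AEStronglyMeasurable (g k) μ)
    (hg_le : ∀ k x, |g k x| ≤ 1) (hg_supp : ∀ k, Function.support (g k) ⊆ s)
    (hg_lim : ∀ x, Tendsto (fun k => g k x) atTop (𝓝 (s.indicator 1 x))) :
    Tendsto (fun k => ∫ x, g k x • f x ∂μ) atTop (𝓝 (∫ x in s, f x ∂μ)) := by
  have hfs : Integrable (s.indicator f) μ := hf.integrable_indicator hs
  have hg_smul : ∀ k, (fun x => g k x • f x) = fun x => g k x • s.indicator f x := by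
    intro k
    funext x
    by_cases hx : x ∈ s
    · rw [indicator_of_mem hx]
    · rw [Function.notMem_support.1 fun h => hx (hg_supp k h), zero_smul, zero_smul]
  simp_rw [hg_smul, ← integral_indicator hs]
  refine tendsto_integral_of_dominated_convergence (fun x => ‖s.indicator f x‖)
    (fun k => (hg_meas k).smul hfs.aestronglyMeasurable) hfs.norm
    (fun k => ae_of_all _ fun x => ?_) (ae_of_all _ fun x => ?_)
  · rw [norm_smul, Real.norm_eq_abs]
    exact mul_le_of_le_one_left (norm_nonneg _) (hg_le k x)
  · convert (hg_lim x).smul_const (s.indicator f x) using 2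
    by_cases hx : x ∈ s <;> simp [hx]

theorem exists_seq_contDiffBump_tendsto_indicator_ball {E : Type*} [NormedAddCommGroup E]
    [NormedSpace ℝ E] [HasContDiffBump E] (x₀ : E) {r : ℝ} (hr : 0 < r) :
    ∃ φ : ℕ → ContDiffBump x₀, (∀ k, (φ k).rOut < r) ∧
      ∀ x, Tendsto (fun k => φ k x) atTop (𝓝 ((ball x₀ r).indicator 1 x)) := by
  obtain ⟨t, ht_mono, ht_mem, ht_lim⟩ := exists_seq_strictMono_tendsto' hr
  refine ⟨fun k => ⟨t k, t (k + 1), (ht_mem k).1, ht_mono k.lt_succ_self⟩,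
    fun k => (ht_mem (k + 1)).2, fun x => ?_⟩
  by_cases hx : x ∈ ball x₀ r
  · rw [indicator_of_mem hx]
    refine tendsto_const_nhds.congr' ?_
    filter_upwards [ht_lim.eventually_const_le (mem_ball.1 hx)] with k hk
    exact (ContDiffBump.one_of_mem_closedBall _ (mem_closedBall.2 hk)).symm
  · rw [indicator_of_notMem hx]
    refine tendsto_const_nhds.congr fun k => (ContDiffBump.zero_of_le_dist _ ?_).symm
    exact (ht_mem (k + 1)).2.le.trans (not_lt.1 hx)

section LinearMapA

variable {n : ℕ} {V W : Type*} [NormedAddCommGroup V] [NormedSpace ℝ V]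
  [NormedAddCommGroup W] [NormedSpace ℝ W]

/-- The map `a ↦ 𝔸a` on linear maps `a : ℝⁿ → V`. -/
def linearMapA (A : Fin n → V →L[ℝ] W) : (Euc n →ₗ[ℝ] V) →ₗ[ℝ] W :=
  ∑ α, (A α).toLinearMap ∘ₗ LinearMap.applyₗ (EuclideanSpace.single α 1)

theorem linearMapA_apply (A : Fin n → V →L[ℝ] W) (a : Euc n →ₗ[ℝ] V) :
    linearMapA A a = ∑ α, A α (a (EuclideanSpace.single α 1)) := by
  simp [linearMapA]

theorem apply_mem_range_linearMapA (A : Fin n → V →L[ℝ] W) (α : Fin n) (z : V) :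
    A α z ∈ LinearMap.range (linearMapA A) :=
  ⟨(EuclideanSpace.proj α : Euc n →L[ℝ] ℝ).toLinearMap.smulRight z, by
    simp [linearMapA_apply, apply_ite, Finset.sum_ite_eq]⟩

end LinearMapA

section AGradient

variable {n : ℕ} {V W : Type*} [NormedAddCommGroup V] [InnerProductSpace ℝ V]
  [NormedAddCommGroup W] [InnerProductSpace ℝ W]

theorem otimesA_single (A : Fin n → V →L[ℝ] W) (α : Fin n) (z : V) :
    otimesA A (EuclideanSpace.single α 1) z = A α z := by
  simp [otimesA, ite_smul, Finset.sum_ite_eq']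

theorem range_linearMapA_le_span_otimesA (A : Fin n → V →L[ℝ] W) :
    LinearMap.range (linearMapA A) ≤
      Submodule.span ℝ {w : W | ∃ (ξ : Euc n) (v : V), w = otimesA A ξ v} := by
  rintro _ ⟨a, rfl⟩
  rw [linearMapA_apply]
  exact Submodule.sum_mem _ fun α _ =>
    Submodule.subset_span ⟨_, _, (otimesA_single A α _).symm⟩

variable {A : Fin n → V →L[ℝ] W} {U : Set (Euc n)} {u : Euc n → V} {μ : Measure (Euc n)}
  {σ : Euc n → W} {S : Submodule ℝ W} [FiniteDimensional ℝ W]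

theorem HasAGradLoc.integral_smul_mem (hu : HasAGradLoc A U u μ σ)
    (hS : ∀ α z, A α z ∈ S) {φ : Euc n → ℝ} (hφ : IsTest U φ) :
    ∫ x, φ x • σ x ∂μ ∈ S := by
  have : IsClosed (S : Set W) := S.closed_of_finiteDimensional
  rw [hu.ibp φ hφ]
  exact S.neg_mem <| S.integral_mem fun x =>
    Submodule.sum_mem _ fun α _ => S.smul_mem _ (hS α (u x))

theorem HasAGradLoc.setIntegral_ball_mem (hu : HasAGradLoc A U u μ σ)
    (hS : ∀ α z, A α z ∈ S) {x₀ : Euc n} {r : ℝ} (hr : 0 < r) (hB : closure (ball x₀ r) ⊆ U) :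
    ∫ x in ball x₀ r, σ x ∂μ ∈ S := by
  by_cases hσ : IntegrableOn σ (ball x₀ r) μ
  · obtain ⟨φ, hφr, hφ_lim⟩ := exists_seq_contDiffBump_tendsto_indicator_ball x₀ hr
    have hφ_supp : ∀ k, Function.support (φ k) ⊆ ball x₀ r := fun k =>
      (φ k).support_eq ▸ ball_subset_ball (hφr k).le
    have hφ_test : ∀ k, IsTest U (φ k) := fun k =>
      ⟨(φ k).contDiff, (φ k).hasCompactSupport, (φ k).tsupport_eq ▸
        (closedBall_subset_ball (hφr k)).trans (subset_closure.trans hB)⟩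
    have hlim := tendsto_integral_smul_of_tendsto_indicator measurableSet_ball hσ
      (fun k => (φ k).continuous.aestronglyMeasurable)
      (fun k x => abs_le.2 ⟨by linarith [(φ k).nonneg' x], (φ k).le_one⟩) hφ_supp hφ_lim
    exact S.closed_of_finiteDimensional.mem_of_tendsto hlim
      (Eventually.of_forall fun k => hu.integral_smul_mem hS (hφ_test k))
  · rw [integral_undef hσ]
    exact S.zero_mem

end AGradient

theorem statement7_general
    {n : ℕ} {V W : Type*}
    [NormedAddCommGroup V] [InnerProductSpace ℝ V]
    [NormedAddCommGroup W] [InnerProductSpace ℝ W] [FiniteDimensional ℝ W]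
    (A : Fin n → V →L[ℝ] W)
    (Ω : Set (Euc n))
    (u : Euc n → V) (μ : Measure (Euc n)) (σ : Euc n → W)
    (hu : HasAGradLoc A Ω u μ σ)
    (x₀ : Euc n) (r : ℝ) (hr : 0 < r) (hB : closure (ball x₀ r) ⊆ Ω) :
    (∃ a : Euc n →ₗ[ℝ] V,
        (∑ α, A α (a (EuclideanSpace.single α 1))) = meanA μ σ (ball x₀ r)) ∧
      meanA μ σ (ball x₀ r) ∈
        Submodule.span ℝ {w : W | ∃ (ξ : Euc n) (v : V), w = otimesA A ξ v} := by
  have hmean : meanA μ σ (ball x₀ r) ∈ LinearMap.range (linearMapA A) :=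
    Submodule.smul_mem _ _
      (hu.setIntegral_ball_mem (apply_mem_range_linearMapA A) hr hB)
  obtain ⟨a, ha⟩ := hmean
  exact ⟨⟨a, by rw [← ha, linearMapA_apply]⟩, range_linearMapA_le_span_otimesA A ⟨a, ha⟩⟩

/-- For `u ∈ BV^𝔸_loc(Ω)` and a ball `B ⋐ Ω` there is a linear map
`a : ℝⁿ → V` with `𝔸 a = (𝔸 u)_B`; in particular `(𝔸 u)_B` lies in the effective range
`ℛ(𝔸) = span{ξ ⊗_𝔸 v}`. -/
theorem statement7
    {n : ℕ} {V W : Type*}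
    [NormedAddCommGroup V] [InnerProductSpace ℝ V] [FiniteDimensional ℝ V]
    [NormedAddCommGroup W] [InnerProductSpace ℝ W] [FiniteDimensional ℝ W]
    (A : Fin n → V →L[ℝ] W)
    (Ω : Set (Euc n)) (hΩ : IsOpen Ω)
    (u : Euc n → V) (μ : Measure (Euc n)) (σ : Euc n → W)
    (hu : HasAGradLoc A Ω u μ σ)
    (x₀ : Euc n) (r : ℝ) (hr : 0 < r) (hB : closure (ball x₀ r) ⊆ Ω) :
    (∃ a : Euc n →ₗ[ℝ] V,
        (∑ α, A α (a (EuclideanSpace.single α 1))) = meanA μ σ (ball x₀ r)) ∧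
      meanA μ σ (ball x₀ r) ∈
        Submodule.span ℝ {w : W | ∃ (ξ : Euc n) (v : V), w = otimesA A ξ v} :=
  statement7_general A Ω u μ σ hu x₀ r hr hB
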